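/- arXiv:1310.5322 — 2 statements merged into one kernel-verified Lean document; each statement's English description precedes it below -/
import Mathlib

section
/- Let J(t) be a smooth monotone curve in the Lagrangian Grassmannian of a symplectic vector space, let J^{-1}(t) = {e(t) : e(·) a curve in J with ė(t) ∈ J(t)}, and define g¹_t on J^{-1}(t) by g¹_t(e,e) = ω(ë(t), ė(t)) for any curve e(·) in J^{-1} with e(t) = e. Then g¹_t is well-defined: if e₁(·), e₂(·) are curves in J^{-1} with e₁(t) = e₂(t), then ω(ë₁(t), ė₁(t)) = ω(ë₂(t), ė₂(t)). -/
/-- for a monotone curve `J` in the Lagrangian Grassmannian, the bilinear form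
`g¹_t(e,e) = ω(ë(t), ė(t))` on `J^{-1}(t)` is well defined: for two curves `e₁, e₂` in
`J^{-1}` with `e₁(t) = e₂(t)` one has `ω(ë₁(t), ė₁(t)) = ω(ë₂(t), ė₂(t))`.
Here `J¹(s)` contains `J(s)` and the second derivatives, `J^{-1}(s)` is the symplectic
complement of `J¹(s)`, and smoothness of `J¹` is expressed through differentiable
selections. -/
theorem stmt1 {V : Type*} [NormedAddCommGroup V] [NormedSpace ℝ V] [FiniteDimensional ℝ V]
    (ω : V →ₗ[ℝ] V →ₗ[ℝ] ℝ) (halt : ∀ v, ω v v = 0)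
    (J Jm1 J1 : ℝ → Submodule ℝ V)
    (hmono : ∀ s, ∀ e : ℝ → V, (∀ u, e u ∈ J u) → ∀ d : V, HasDerivAt e d s →
      0 ≤ ω d (e s))
    (hJiso : ∀ s, ∀ x ∈ J s, ∀ y ∈ J s, ω x y = 0)
    (hJJ1 : ∀ s, J s ≤ J1 s)
    (hJm1 : ∀ s, ∀ v : V, v ∈ Jm1 s ↔ ∀ w ∈ J1 s, ω v w = 0)
    (t : ℝ)
    (hsel : ∀ w ∈ J1 t, ∃ c : ℝ → V, (∀ s, c s ∈ J1 s) ∧ c t = w ∧ DifferentiableAt ℝ c t)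
    (e₁ e₂ d₁ d₂ : ℝ → V) (dd₁ dd₂ : V)
    (he₁ : ∀ s, e₁ s ∈ Jm1 s) (he₂ : ∀ s, e₂ s ∈ Jm1 s)
    (hd₁ : ∀ s, HasDerivAt e₁ (d₁ s) s) (hd₂ : ∀ s, HasDerivAt e₂ (d₂ s) s)
    (hdJ₁ : ∀ s, d₁ s ∈ J s) (hdJ₂ : ∀ s, d₂ s ∈ J s)
    (hdd₁ : HasDerivAt d₁ dd₁ t) (hdd₂ : HasDerivAt d₂ dd₂ t)
    (hddJ1 : dd₁ ∈ J1 t) (hddJ2 : dd₂ ∈ J1 t)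
    (heq : e₁ t = e₂ t) :
    ω dd₁ (d₁ t) = ω dd₂ (d₂ t) := by
  -- continuous bilinear version of ω
  set Ω : V →L[ℝ] V →L[ℝ] ℝ :=
    LinearMap.toContinuousLinearMap
      ((LinearMap.toContinuousLinearMap :
          (V →ₗ[ℝ] ℝ) ≃ₗ[ℝ] (V →L[ℝ] ℝ)).toLinearMap ∘ₗ ω) with hΩ
  have hΩapp : ∀ x y, Ω x y = ω x y := by
    intro x y; simp [hΩ]
  -- skew-symmetry
  have hskew : ∀ x y, ω x y = - ω y x := by
    intro x y
    have h := halt (x + y)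
    simp only [map_add, LinearMap.add_apply, halt] at h
    linarith
  -- general product rule for Ω along two curves
  have hprod : ∀ (f g : ℝ → V) (f' g' : V), HasDerivAt f f' t → HasDerivAt g g' t →
      HasDerivAt (fun s => Ω (f s) (g s)) (Ω f' (g t) + Ω (f t) g') t := by
    intro f g f' g' hf hg
    exact (((Ω.hasFDerivAt (x := f t)).comp_hasDerivAt t hf).clm_apply hg)
  -- Step 1: d₁ t - d₂ t is ω-orthogonal to J1 t
  have hδ : ∀ w ∈ J1 t, ω (d₁ t - d₂ t) w = 0 := by
    intro w hw
    obtain ⟨c, hcJ, hct, hcd⟩ := hsel w hw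
    have hc : HasDerivAt c (deriv c t) t := hcd.hasDerivAt
    have hder := hprod (fun s => e₁ s - e₂ s) c (d₁ t - d₂ t) (deriv c t)
      ((hd₁ t).sub (hd₂ t)) hc
    have hzero : (fun s => Ω (e₁ s - e₂ s) (c s)) = fun _ => (0 : ℝ) := by
      funext s
      have h1 : ω (e₁ s) (c s) = 0 := (hJm1 s (e₁ s)).mp (he₁ s) _ (hcJ s)
      have h2 : ω (e₂ s) (c s) = 0 := (hJm1 s (e₂ s)).mp (he₂ s) _ (hcJ s)
      rw [hΩapp]
      simp [map_sub, LinearMap.sub_apply, h1, h2]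
    rw [hzero] at hder
    have huniq := hder.unique (hasDerivAt_const t (0 : ℝ))
    have heq0 : e₁ t - e₂ t = 0 := by rw [heq]; abel
    simp only [hct, heq0, map_zero, ContinuousLinearMap.zero_apply, add_zero] at huniq
    rw [← hΩapp _ w, huniq]
  -- Step 2: differentiate ω(d₁ - d₂, d₂) ≡ 0
  have hder2 := hprod (fun s => d₁ s - d₂ s) d₂ (dd₁ - dd₂) dd₂
    (hdd₁.sub hdd₂) hdd₂
  have hzero2 : (fun s => Ω (d₁ s - d₂ s) (d₂ s)) = fun _ => (0 : ℝ) := by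
    funext s
    have h1 : ω (d₁ s) (d₂ s) = 0 := hJiso s _ (hdJ₁ s) _ (hdJ₂ s)
    have h2 : ω (d₂ s) (d₂ s) = 0 := halt _
    rw [hΩapp]
    simp [map_sub, LinearMap.sub_apply, h1, h2]
  rw [hzero2] at hder2
  have huniq2 := hder2.unique (hasDerivAt_const t (0 : ℝ))
  have hstep2 : ω (dd₁ - dd₂) (d₂ t) = 0 := by
    have h3 : Ω (d₁ t - d₂ t) dd₂ = 0 := by rw [hΩapp]; exact hδ dd₂ hddJ2
    rw [h3, add_zero] at huniq2
    rw [← hΩapp, huniq2]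
  -- Step 3: combine
  have hstep3 : ω dd₁ (d₁ t - d₂ t) = 0 := by
    rw [hskew]
    rw [hδ dd₁ hddJ1]
    ring
  have e1 : ω (dd₁ - dd₂) (d₂ t) = ω dd₁ (d₂ t) - ω dd₂ (d₂ t) := by
    simp [map_sub, LinearMap.sub_apply]
  have e2 : ω dd₁ (d₁ t - d₂ t) = ω dd₁ (d₁ t) - ω dd₁ (d₂ t) := by
    simp [map_sub]
  rw [e1] at hstep2
  rw [e2] at hstep3
  linarith
end

section
/- Let E¹(t) be a family of bases of J^{-1}(t), orthonormal with respect to g¹_t, let Ē¹ be such a family, and let O(t) be a family of orthogonal matrices with E¹(t) = O(t)Ē¹(t). Then ω((d²/dt²)(OĒ¹), (d²/dt²)(OĒ¹)) = −4ȮOᵀ + O ω(Ë¹, Ë¹) Oᵀ; consequently E¹ satisfies ω(Ë¹, Ë¹) = 0 if and only if O solves Ȯ = (1/4) O ω(Ë¹, Ë¹). -/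
/-!
Writing `E = O Ē`, one has `E'' = O Ē'' + 2 Ȯ Ē' + Ö Ē`. The frame relations kill every pairing
except `ω(Ē'', Ē'') = A` and `ω(Ē'', Ē') = I = -ω(Ē', Ē'')`, so
`ω(E'', E'') = O A Oᵀ + 2 (O Ȯᵀ - Ȯ Oᵀ)`, and differentiating `O Oᵀ = I` gives `O Ȯᵀ = -Ȯ Oᵀ`.
Since `Oᵀ` is invertible, `ω(E'', E'') = (-4 Ȯ + O A) Oᵀ` vanishes iff `Ȯ = O A / 4`.
-/

open scoped BigOperators
open Matrix

section

variable {𝕜 V : Type*} {ι κ μ : Type*}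

section Algebra

variable [CommRing 𝕜] [AddCommGroup V] [Module 𝕜 V]

def Matrix.lincomb [Fintype κ] (M : Matrix ι κ 𝕜) (X : κ → V) : ι → V :=
  fun i => ∑ j, M i j • X j

def LinearMap.gram (ω : V →ₗ[𝕜] V →ₗ[𝕜] 𝕜) (X : ι → V) (Y : κ → V) : Matrix ι κ 𝕜 :=
  Matrix.of fun i j => ω (X i) (Y j)

namespace LinearMap

variable (ω : V →ₗ[𝕜] V →ₗ[𝕜] 𝕜)

theorem gram_add_left (X X' : ι → V) (Y : κ → V) :
    ω.gram (X + X') Y = ω.gram X Y + ω.gram X' Y := by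
  ext i j; simp [gram]

theorem gram_add_right (X : ι → V) (Y Y' : κ → V) :
    ω.gram X (Y + Y') = ω.gram X Y + ω.gram X Y' := by
  ext i j; simp [gram]

theorem gram_lincomb_lincomb [Fintype κ] (M : Matrix ι κ 𝕜) (N : Matrix μ κ 𝕜) (X Y : κ → V) :
    ω.gram (M.lincomb X) (N.lincomb Y) = M * ω.gram X Y * Nᵀ := by
  ext i j
  simp only [gram, lincomb, of_apply, map_sum, map_smul, LinearMap.sum_apply,
    LinearMap.smul_apply, smul_eq_mul, mul_apply, transpose_apply, Finset.mul_sum,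
    Finset.sum_mul]
  exact Finset.sum_congr rfl fun _ _ => Finset.sum_congr rfl fun _ _ => by ring

variable {ω}

theorem IsAlt.gram_swap (hω : ω.IsAlt) (X : ι → V) (Y : κ → V) :
    ω.gram Y X = -(ω.gram X Y)ᵀ := by
  ext i j; simp [gram, hω.neg]

/-- The first argument is `(O E)'' = O E'' + 2 O' E' + O'' E`. -/
theorem IsAlt.gram_lincomb_second_deriv [Fintype κ] [DecidableEq κ] (hω : ω.IsAlt)
    {E D1 D2 : κ → V} {O O' O'' : Matrix κ κ 𝕜}
    (hEE : ω.gram E E = 0) (hD1E : ω.gram D1 E = 0) (hD2E : ω.gram D2 E = 0)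
    (hD1D1 : ω.gram D1 D1 = 0) (hD2D1 : ω.gram D2 D1 = 1) (hO : O * O'ᵀ = -(O' * Oᵀ)) :
    ω.gram ((O.lincomb D2 + O'.lincomb D1) + (O'.lincomb D1 + O''.lincomb E))
        ((O.lincomb D2 + O'.lincomb D1) + (O'.lincomb D1 + O''.lincomb E)) =
      (-4 : 𝕜) • (O' * Oᵀ) + O * ω.gram D2 D2 * Oᵀ := by
  have hED1 : ω.gram E D1 = 0 := by rw [hω.gram_swap, hD1E, transpose_zero, neg_zero]
  have hED2 : ω.gram E D2 = 0 := by rw [hω.gram_swap, hD2E, transpose_zero, neg_zero]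
  have hD1D2 : ω.gram D1 D2 = -1 := by rw [hω.gram_swap, hD2D1, transpose_one]
  simp only [gram_add_left, gram_add_right, gram_lincomb_lincomb, hEE, hD1E, hD2E, hD1D1, hD2D1,
    hED1, hED2, hD1D2, Matrix.mul_zero, Matrix.zero_mul, Matrix.mul_one, Matrix.mul_neg,
    Matrix.neg_mul, add_zero, hO]
  module

end LinearMap

theorem Matrix.mul_transpose_eq_zero_iff [Fintype ι] [DecidableEq ι] {O P : Matrix ι ι 𝕜}
    (hO : O * Oᵀ = 1) : P * Oᵀ = 0 ↔ P = 0 := by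
  refine ⟨fun h => ?_, fun h => by rw [h, Matrix.zero_mul]⟩
  rw [← Matrix.mul_one P, ← mul_eq_one_comm.mp hO, ← Matrix.mul_assoc, h, Matrix.zero_mul]

end Algebra

theorem Matrix.neg_four_smul_mul_transpose_add_eq_zero_iff {K : Type*} [Field K] [CharZero K]
    [Fintype ι] [DecidableEq ι] {O P Q : Matrix ι ι K} (hO : O * Oᵀ = 1) :
    (-4 : K) • (P * Oᵀ) + Q * Oᵀ = 0 ↔ P = (1 / 4 : K) • Q := by
  rw [← Matrix.smul_mul, ← Matrix.add_mul, mul_transpose_eq_zero_iff hO, neg_smul,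
    neg_add_eq_zero, one_div, eq_inv_smul_iff₀ (by norm_num : (4 : K) ≠ 0)]

section Calculus

variable [NontriviallyNormedField 𝕜] [NormedAddCommGroup V] [NormedSpace 𝕜 V] {s : 𝕜}

theorem Matrix.hasDerivAt_lincomb_apply [Fintype κ] {M : 𝕜 → Matrix ι κ 𝕜} {M' : Matrix ι κ 𝕜}
    {X : 𝕜 → κ → V} {X' : κ → V} (hM : ∀ i j, HasDerivAt (fun u => M u i j) (M' i j) s)
    (hX : ∀ j, HasDerivAt (fun u => X u j) (X' j) s) (i : ι) :
    HasDerivAt (fun u => (M u).lincomb (X u) i) (((M s).lincomb X' + M'.lincomb (X s)) i) s := by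
  simp only [Pi.add_apply, lincomb, ← Finset.sum_add_distrib]
  exact HasDerivAt.fun_sum fun j _ => (hM i j).smul (hX j)

theorem Matrix.hasDerivAt_mul_apply [Fintype κ] {M : 𝕜 → Matrix ι κ 𝕜} {N : 𝕜 → Matrix κ μ 𝕜}
    {M' : Matrix ι κ 𝕜} {N' : Matrix κ μ 𝕜}
    (hM : ∀ i j, HasDerivAt (fun u => M u i j) (M' i j) s)
    (hN : ∀ i j, HasDerivAt (fun u => N u i j) (N' i j) s) (i : ι) (j : μ) :
    HasDerivAt (fun u => (M u * N u) i j) ((M' * N s + M s * N') i j) s := by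
  simp only [add_apply, mul_apply, ← Finset.sum_add_distrib]
  exact HasDerivAt.fun_sum fun a _ => (hM i a).mul (hN a j)

theorem Matrix.mul_transpose_deriv_eq_neg [Fintype ι] [DecidableEq ι] {O : 𝕜 → Matrix ι ι 𝕜}
    {O' : Matrix ι ι 𝕜} (hO : ∀ i j, HasDerivAt (fun u => O u i j) (O' i j) s)
    (horth : ∀ u, O u * (O u)ᵀ = 1) : O s * O'ᵀ = -(O' * (O s)ᵀ) := by
  refine eq_neg_of_add_eq_zero_right (Matrix.ext fun i j => ?_)
  refine (hasDerivAt_mul_apply (N := fun u => (O u)ᵀ) hO (fun i j => hO j i) i j).unique ?_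
  simpa only [horth, zero_apply] using hasDerivAt_const s ((1 : Matrix ι ι 𝕜) i j)

end Calculus

end

/-- if `E¹ = O Eb¹` with `O(t)` orthogonal, then
`ω((OEb¹)'', (OEb¹)'') = −4 Ȯ Oᵀ + O ω(Ë̄¹, Ë̄¹) Oᵀ`; consequently `E¹` satisfies
`ω(Ë¹, Ë¹) = 0` iff `Ȯ = (1/4) O ω(Ë̄¹, Ë̄¹)`.
Here `Eb¹` is a `g¹`-orthonormal family of bases of `J^{-1}(t)`, which is encoded by the
relations `ω(Eb,Eb) = ω(Ė̄,Eb) = ω(Ë̄,Eb) = ω(Ė̄,Ė̄) = 0` and `ω(Ë̄,Ė̄) = I`. -/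
theorem stmt2 {V : Type*} [NormedAddCommGroup V] [NormedSpace ℝ V] {k : ℕ}
    (ω : V →ₗ[ℝ] V →ₗ[ℝ] ℝ) (halt : ∀ v, ω v v = 0)
    (Eb D1 D2 : ℝ → Fin k → V)
    (hEb0 : ∀ s i, HasDerivAt (fun u => Eb u i) (D1 s i) s)
    (hD1 : ∀ s i, HasDerivAt (fun u => D1 u i) (D2 s i) s)
    (O O' O'' : ℝ → Matrix (Fin k) (Fin k) ℝ)
    (hO : ∀ s i j, HasDerivAt (fun u => O u i j) (O' s i j) s)
    (hO' : ∀ s i j, HasDerivAt (fun u => O' u i j) (O'' s i j) s)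
    (horth : ∀ s, O s * (O s)ᵀ = 1)
    (hEE : ∀ s i j, ω (Eb s i) (Eb s j) = 0)
    (hE'E : ∀ s i j, ω (D1 s i) (Eb s j) = 0)
    (hE''E : ∀ s i j, ω (D2 s i) (Eb s j) = 0)
    (hE'E' : ∀ s i j, ω (D1 s i) (D1 s j) = 0)
    (hE''E' : ∀ s i j, ω (D2 s i) (D1 s j) = (if i = j then (1:ℝ) else 0))
    -- the family `E = O Eb` and its first two derivatives
    (E E1 E2 : ℝ → Fin k → V)
    (hE : ∀ s i, E s i = ∑ j, O s i j • Eb s j)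
    (hE1 : ∀ s i, HasDerivAt (fun u => E u i) (E1 s i) s)
    (hE2 : ∀ s i, HasDerivAt (fun u => E1 u i) (E2 s i) s) :
    (∀ t i j, ω (E2 t i) (E2 t j) =
      ((-(4:ℝ)) • (O' t * (O t)ᵀ)
        + O t * (Matrix.of fun a b => ω (D2 t a) (D2 t b)) * (O t)ᵀ) i j)
    ∧ ((∀ t i j, ω (E2 t i) (E2 t j) = 0) ↔
      (∀ t, O' t = (1/4 : ℝ) • (O t * Matrix.of fun a b => ω (D2 t a) (D2 t b)))) := by
  have hE1' : ∀ s, E1 s = (O s).lincomb (D1 s) + (O' s).lincomb (Eb s) := by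
    obtain rfl : E = fun u => (O u).lincomb (Eb u) := funext₂ hE
    exact fun s => funext fun i => (hE1 s i).unique (hasDerivAt_lincomb_apply (hO s) (hEb0 s) i)
  have hE2' : ∀ s, E2 s = ((O s).lincomb (D2 s) + (O' s).lincomb (D1 s)) +
      ((O' s).lincomb (D1 s) + (O'' s).lincomb (Eb s)) := by
    obtain rfl := funext hE1'
    exact fun s => funext fun i => (hE2 s i).unique <|
      (hasDerivAt_lincomb_apply (hO s) (hD1 s) i).add (hasDerivAt_lincomb_apply (hO' s) (hEb0 s) i)
  have hgram : ∀ t, ω.gram (E2 t) (E2 t) =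
      (-(4:ℝ)) • (O' t * (O t)ᵀ) + O t * ω.gram (D2 t) (D2 t) * (O t)ᵀ := fun t => by
    rw [hE2' t]
    exact LinearMap.IsAlt.gram_lincomb_second_deriv halt (Matrix.ext (hEE t))
      (Matrix.ext (hE'E t)) (Matrix.ext (hE''E t)) (Matrix.ext (hE'E' t)) (Matrix.ext (hE''E' t))
      (mul_transpose_deriv_eq_neg (hO t) horth)
  refine ⟨fun t i j => congrFun (congrFun (hgram t) i) j, forall_congr' fun t => ?_⟩
  rw [← neg_four_smul_mul_transpose_add_eq_zero_iff (horth t)]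
  exact Matrix.ext_iff.trans (Eq.congr_left (hgram t))
end
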